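/- Fix α, β > −1 and let P_k^{(α,β)} denote the Jacobi polynomials. If p(x) = Σ_{k=0}^n a_k P_k^{(α,β)}(x) is a real polynomial, then Z_C(Σ_{k=0}^n k(k+1+α+β) a_k P_k^{(α,β)}(x)) ≤ Z_C(p), i.e., the sequence {k(k+1+α+β)}_{k=0}^∞ is a complex zero decreasing sequence for the Jacobi basis. -/

import Mathlib

open Polynomial Finset

open scoped Classical in
/-- Number of non-real complex zeros of a real polynomial, counted with multiplicity. -/
noncomputable def ZC (p : Polynomial ℝ) : ℕ :=
  (((p.map (algebraMap ℝ ℂ)).roots).filter (fun z => z.im ≠ 0)).card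

/-- Number of real zeros of a real polynomial, counted with multiplicity. -/
noncomputable def ZR (p : Polynomial ℝ) : ℕ := p.roots.card

/-!
The sum `∑ k (k + 1 + α + β) a_k P_k` is `D p` for the Jacobi operator
`D p = (x² - 1) p'' + ((2 + α + β) x + α - β) p'`. With the Jacobi weight
`w = |1 - x| ^ (α + 1) |1 + x| ^ (β + 1)` one has `(w p')' = w / (x² - 1) · D p`, and `w p'`
vanishes at `±1` (as `α, β > -1`) and at the real zeros of `p'`. Rolle's theorem puts a zero of `D p`
strictly between any two consecutive such points; with the multiplicities `D p` inherits from `p'`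
this gives `Z_R(D p) > Z_R(p') ≥ Z_R(p) - 1`. As `deg D p ≤ deg p` and `Z_C = deg - Z_R`, this is
`Z_C(D p) ≤ Z_C(p)`.
-/

theorem sum_rootMultiplicity_eq_card_roots {R : Type*} [CommRing R] [IsDomain R] {p : R[X]}
    {S : Finset R} (h : ∀ x ∈ p.roots, x ∈ S) : ∑ x ∈ S, p.rootMultiplicity x = p.roots.card := by
  classical
  simpa only [count_roots] using Multiset.sum_count_eq_card h

theorem ZC_add_ZR (r : ℝ[X]) : ZC r + ZR r = r.natDegree := by
  classical
  have hreal : (r.map (algebraMap ℝ ℂ)).roots.filter (· ∈ (algebraMap ℝ ℂ).range)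
      = r.roots.map (algebraMap ℝ ℂ) :=
    filter_roots_map_range_eq_map_roots (algebraMap ℝ ℂ).injective r
  have hnonreal : (r.map (algebraMap ℝ ℂ)).roots.filter (· ∉ (algebraMap ℝ ℂ).range)
      = (r.map (algebraMap ℝ ℂ)).roots.filter (fun z => z.im ≠ 0) := by
    refine Multiset.filter_congr fun z _ => not_congr ⟨?_, fun h => ⟨z.re, Complex.ext rfl h.symm⟩⟩
    rintro ⟨x, rfl⟩
    exact Complex.ofReal_im x
  have hsplit := congrArg Multiset.card
    (Multiset.filter_add_not (· ∈ (algebraMap ℝ ℂ).range) (r.map (algebraMap ℝ ℂ)).roots)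
  rw [Multiset.card_add, hreal, hnonreal, Multiset.card_map,
    ← (IsAlgClosed.splits (r.map (algebraMap ℝ ℂ))).natDegree_eq_card_roots,
    natDegree_map] at hsplit
  rw [ZC, ZR, ← hsplit, add_comm]

theorem sum_rootMultiplicity_add_card_le {R : Type*} [CommRing R] [IsDomain R] [LinearOrder R]
    {q : R[X]} (hq : q ≠ 0) {S : Finset R}
    (h : ∀ x ∈ S, ∀ y ∈ S, x < y → (∀ z ∈ S, z ∉ Set.Ioo x y) → ∃ z, q.IsRoot z ∧ x < z ∧ z < y) :
    ∑ x ∈ S, q.rootMultiplicity x + #S ≤ q.roots.card + 1 := by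
  classical
  set T := q.roots.toFinset
  have hinterleaved : #S ≤ #(T \ S) + 1 := card_le_sdiff_of_interleaved fun x hx y hy hxy hS => by
    obtain ⟨z, hz, hxz, hzy⟩ := h x hx y hy hxy hS
    exact ⟨z, Multiset.mem_toFinset.2 ((mem_roots hq).2 hz), hxz, hzy⟩
  have hgaps : #(T \ S) ≤ ∑ x ∈ T \ S, q.rootMultiplicity x := by
    rw [card_eq_sum_ones]
    refine sum_le_sum fun x hx => ?_
    exact (rootMultiplicity_pos hq).2
      ((mem_roots hq).1 (Multiset.mem_toFinset.1 (mem_sdiff.1 hx).1))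
  have hsum : ∑ x ∈ S, q.rootMultiplicity x + ∑ x ∈ T \ S, q.rootMultiplicity x = q.roots.card := by
    rw [← sum_union disjoint_sdiff, union_sdiff_self_eq_union]
    exact sum_rootMultiplicity_eq_card_roots fun x hx =>
      mem_union_right _ (Multiset.mem_toFinset.2 hx)
  omega

section MulDerivativeAddMul
variable {R : Type*} [CommRing R] {A B u : R[X]}

theorem rootMultiplicity_sub_one_le_rootMultiplicity_mul_derivative_add_mul
    (h : A * derivative u + B * u ≠ 0) (x : R) :
    u.rootMultiplicity x - 1 ≤ (A * derivative u + B * u).rootMultiplicity x := by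
  have hu := u.pow_rootMultiplicity_dvd x
  rw [le_rootMultiplicity_iff h]
  exact dvd_add ((pow_sub_one_dvd_derivative_of_pow_dvd hu).mul_left _)
    (((pow_dvd_pow _ (Nat.sub_le _ 1)).trans hu).mul_left _)

theorem rootMultiplicity_le_rootMultiplicity_mul_derivative_add_mul
    (h : A * derivative u + B * u ≠ 0) {x : R} (hA : A.IsRoot x) :
    u.rootMultiplicity x ≤ (A * derivative u + B * u).rootMultiplicity x := by
  have hu := u.pow_rootMultiplicity_dvd x
  rw [le_rootMultiplicity_iff h]
  refine dvd_add ?_ (hu.mul_left _)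
  calc (X - C x) ^ u.rootMultiplicity x ∣ (X - C x) * (X - C x) ^ (u.rootMultiplicity x - 1) :=
        (pow_dvd_pow _ (by omega)).trans (pow_succ' _ _).dvd
    _ ∣ A * derivative u :=
        mul_dvd_mul (dvd_iff_isRoot.2 hA) (pow_sub_one_dvd_derivative_of_pow_dvd hu)

end MulDerivativeAddMul

theorem natDegree_mul_iterate_derivative_le {R : Type*} [Semiring R] {A : R[X]} {k : ℕ}
    (hA : A.natDegree ≤ k) (p : R[X]) : (A * derivative^[k] p).natDegree ≤ p.natDegree := by
  by_cases hp : p.natDegree < k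
  · simp [iterate_derivative_eq_zero hp]
  · have := natDegree_iterate_derivative p k
    have := natDegree_mul_le (p := A) (q := derivative^[k] p)
    omega

noncomputable def jacobiOp (α β : ℝ) : ℝ[X] →ₗ[ℝ] ℝ[X] :=
  LinearMap.mulLeft ℝ (X ^ 2 - 1) ∘ₗ derivative ∘ₗ derivative
    + LinearMap.mulLeft ℝ (C (2 + α + β) * X + C (α - β)) ∘ₗ derivative

theorem jacobiOp_apply (α β : ℝ) (p : ℝ[X]) : jacobiOp α β p =
    (X ^ 2 - 1) * derivative (derivative p) + (C (2 + α + β) * X + C (α - β)) * derivative p :=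
  rfl

theorem natDegree_jacobiOp_le (α β : ℝ) (p : ℝ[X]) : (jacobiOp α β p).natDegree ≤ p.natDegree :=
  natDegree_add_le_of_degree_le
    (natDegree_mul_iterate_derivative_le (k := 2) (by compute_degree) p)
    (natDegree_mul_iterate_derivative_le (k := 1) (by compute_degree) p)

/-- `|1 - x| ^ (α + 1) * |1 + x| ^ (β + 1)`, written with squares so that it is visibly
differentiable away from `±1`. -/
noncomputable def jacobiWeight (α β x : ℝ) : ℝ :=
  ((1 - x) ^ 2) ^ ((α + 1) / 2) * ((1 + x) ^ 2) ^ ((β + 1) / 2)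

theorem sq_sub_one_ne_zero {x : ℝ} (h1 : x ≠ 1) (h2 : x ≠ -1) : x ^ 2 - 1 ≠ 0 :=
  sub_ne_zero.2 fun h => (sq_eq_one_iff.1 h).elim h1 h2

section JacobiWeight
variable {α β : ℝ}

theorem continuous_jacobiWeight (hα : -1 < α) (hβ : -1 < β) : Continuous (jacobiWeight α β) := by
  unfold jacobiWeight
  fun_prop (disch := linarith)

theorem jacobiWeight_one (hα : -1 < α) : jacobiWeight α β 1 = 0 := by
  simp [jacobiWeight, Real.zero_rpow (by linarith : (α + 1) / 2 ≠ 0)]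

theorem jacobiWeight_neg_one (hβ : -1 < β) : jacobiWeight α β (-1) = 0 := by
  simp [jacobiWeight, Real.zero_rpow (by linarith : (β + 1) / 2 ≠ 0)]

variable {x : ℝ}

theorem jacobiWeight_pos (h1 : x ≠ 1) (h2 : x ≠ -1) : 0 < jacobiWeight α β x := by
  have h1' : 1 - x ≠ 0 := sub_ne_zero.2 h1.symm
  have h2' : 1 + x ≠ 0 := fun h => h2 (by linarith)
  unfold jacobiWeight
  positivity

theorem hasDerivAt_jacobiWeight (h1 : x ≠ 1) (h2 : x ≠ -1) :
    HasDerivAt (jacobiWeight α β)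
      (jacobiWeight α β x * ((2 + α + β) * x + (α - β)) / (x ^ 2 - 1)) x := by
  have h1' : 1 - x ≠ 0 := sub_ne_zero.2 h1.symm
  have h2' : 1 + x ≠ 0 := fun h => h2 (by linarith)
  have hP : (1 - x) ^ 2 ≠ 0 := pow_ne_zero 2 h1'
  have hQ : (1 + x) ^ 2 ≠ 0 := pow_ne_zero 2 h2'
  have hd : HasDerivAt
      (fun y => ((1 - y) ^ 2) ^ ((α + 1) / 2) * ((1 + y) ^ 2) ^ ((β + 1) / 2)) _ x :=
    ((((hasDerivAt_id x).const_sub 1).pow 2).rpow_const (Or.inl hP)).mul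
      ((((hasDerivAt_id x).const_add 1).pow 2).rpow_const (Or.inl hQ))
  refine hd.congr_deriv ?_
  have := sq_sub_one_ne_zero h1 h2
  simp only [Pi.pow_apply, id, Real.rpow_sub_one hP, Real.rpow_sub_one hQ, jacobiWeight]
  generalize ((1 - x) ^ 2) ^ ((α + 1) / 2) = a
  generalize ((1 + x) ^ 2) ^ ((β + 1) / 2) = b
  field_simp
  ring

theorem hasDerivAt_jacobiWeight_mul_eval_derivative (p : ℝ[X]) (h1 : x ≠ 1) (h2 : x ≠ -1) :
    HasDerivAt (fun y => jacobiWeight α β y * (derivative p).eval y)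
      (jacobiWeight α β x / (x ^ 2 - 1) * (jacobiOp α β p).eval x) x := by
  refine ((hasDerivAt_jacobiWeight h1 h2).mul ((derivative p).hasDerivAt x)).congr_deriv ?_
  have := sq_sub_one_ne_zero h1 h2
  simp only [jacobiOp_apply, eval_add, eval_mul, eval_sub, eval_pow, eval_X, eval_one, eval_C]
  field_simp
  ring

end JacobiWeight

theorem exists_isRoot_jacobiOp_between {α β : ℝ} (hα : -1 < α) (hβ : -1 < β) (p : ℝ[X])
    {x y : ℝ} (hxy : x < y)
    (hx : jacobiWeight α β x * (derivative p).eval x = 0)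
    (hy : jacobiWeight α β y * (derivative p).eval y = 0)
    (h1 : (1 : ℝ) ∉ Set.Ioo x y) (h2 : (-1 : ℝ) ∉ Set.Ioo x y) :
    ∃ z, (jacobiOp α β p).IsRoot z ∧ x < z ∧ z < y := by
  have hne : ∀ z ∈ Set.Ioo x y, z ≠ 1 ∧ z ≠ -1 :=
    fun z hz => ⟨fun h => h1 (h ▸ hz), fun h => h2 (h ▸ hz)⟩
  obtain ⟨z, hz, hz0⟩ := exists_hasDerivAt_eq_zero hxy
    ((continuous_jacobiWeight hα hβ).mul (derivative p).continuous).continuousOn (hx.trans hy.symm)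
    fun z hz => hasDerivAt_jacobiWeight_mul_eval_derivative p (hne z hz).1 (hne z hz).2
  have hK : jacobiWeight α β z / (z ^ 2 - 1) ≠ 0 :=
    div_ne_zero (jacobiWeight_pos (hne z hz).1 (hne z hz).2).ne'
      (sq_sub_one_ne_zero (hne z hz).1 (hne z hz).2)
  exact ⟨z, (mul_eq_zero.1 hz0).resolve_left hK, hz⟩

theorem ZR_derivative_lt_ZR_jacobiOp {α β : ℝ} (hα : -1 < α) (hβ : -1 < β) {p : ℝ[X]}
    (hq : jacobiOp α β p ≠ 0) : ZR (derivative p) < ZR (jacobiOp α β p) := by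
  set u := derivative p
  set q := jacobiOp α β p
  have hu : u ≠ 0 := fun h => hq (by simp [q, jacobiOp_apply, u, h])
  set T := u.roots.toFinset \ {1, -1}
  have hdisj : Disjoint {1, -1} T := disjoint_sdiff
  have hzero : ∀ x ∈ {1, -1} ∪ T, jacobiWeight α β x * u.eval x = 0 := by
    intro x hx
    rcases mem_union.1 hx with hx | hx
    · simp only [mem_insert, mem_singleton] at hx
      rcases hx with rfl | rfl
      · rw [jacobiWeight_one hα, zero_mul]
      · rw [jacobiWeight_neg_one hβ, zero_mul]
    · rw [(mem_roots hu).1 (Multiset.mem_toFinset.1 (mem_sdiff.1 hx).1), mul_zero]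
  have hrolle := sum_rootMultiplicity_add_card_le hq fun x hx y hy hxy hgap =>
    exists_isRoot_jacobiOp_between hα hβ p hxy (hzero x hx) (hzero y hy)
      (hgap 1 (by simp)) (hgap (-1) (by simp))
  have hZRu : ∑ x ∈ {1, -1} ∪ T, u.rootMultiplicity x = ZR u :=
    sum_rootMultiplicity_eq_card_roots fun x hx => by
      by_cases h : x ∈ ({1, -1} : Finset ℝ)
      · exact mem_union_left _ h
      · exact mem_union_right _ (mem_sdiff.2 ⟨Multiset.mem_toFinset.2 hx, h⟩)
  have hone : u.rootMultiplicity 1 ≤ q.rootMultiplicity 1 :=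
    rootMultiplicity_le_rootMultiplicity_mul_derivative_add_mul hq (by norm_num)
  have hneg_one : u.rootMultiplicity (-1) ≤ q.rootMultiplicity (-1) :=
    rootMultiplicity_le_rootMultiplicity_mul_derivative_add_mul hq (by norm_num)
  have hinterior : ∑ x ∈ T, u.rootMultiplicity x ≤ ∑ x ∈ T, q.rootMultiplicity x + #T := by
    rw [card_eq_sum_ones, ← sum_add_distrib]
    exact sum_le_sum fun x _ => Nat.sub_le_iff_le_add.1
      (rootMultiplicity_sub_one_le_rootMultiplicity_mul_derivative_add_mul hq x)
  rw [sum_union hdisj, sum_pair (by norm_num)] at hrolle hZRu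
  rw [card_union_of_disjoint hdisj, card_pair (by norm_num)] at hrolle
  unfold ZR at hZRu ⊢
  omega

theorem ZC_jacobiOp_le {α β : ℝ} (hα : -1 < α) (hβ : -1 < β) (p : ℝ[X]) :
    ZC (jacobiOp α β p) ≤ ZC p := by
  by_cases hq : jacobiOp α β p = 0
  · simp [hq, ZC]
  have hp := ZC_add_ZR p
  have hDp := ZC_add_ZR (jacobiOp α β p)
  have hdeg := natDegree_jacobiOp_le α β p
  have hZR := ZR_derivative_lt_ZR_jacobiOp hα hβ hq
  have hrolle : ZR p ≤ ZR (derivative p) + 1 := card_roots_le_derivative p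
  omega

theorem stmt12_general (α β : ℝ) (hα : -1 < α) (hβ : -1 < β)
    (P : ℕ → Polynomial ℝ)
    (hde : ∀ n, (X ^ 2 - 1) * derivative (derivative (P n))
        + (C (2 + α + β) * X + C (α - β)) * derivative (P n)
        = C ((n : ℝ) * ((n : ℝ) + 1 + α + β)) * P n)
    (n : ℕ) (a : ℕ → ℝ) :
    ZC (∑ k ∈ Finset.range (n + 1), C ((k : ℝ) * ((k : ℝ) + 1 + α + β) * a k) * P k)
      ≤ ZC (∑ k ∈ Finset.range (n + 1), C (a k) * P k) := by
  have heigen : ∀ k, jacobiOp α β (P k) = C ((k : ℝ) * ((k : ℝ) + 1 + α + β)) * P k := hde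
  have hsum : ∑ k ∈ Finset.range (n + 1), C ((k : ℝ) * ((k : ℝ) + 1 + α + β) * a k) * P k
      = jacobiOp α β (∑ k ∈ Finset.range (n + 1), C (a k) * P k) := by
    rw [map_sum]
    refine sum_congr rfl fun k _ => ?_
    rw [C_mul' (a k), map_smul, heigen, C_mul', C_mul', smul_smul, mul_comm]
  rw [hsum]
  exact ZC_jacobiOp_le hα hβ _

theorem stmt12 (α β : ℝ) (hα : -1 < α) (hβ : -1 < β)
    (P : ℕ → Polynomial ℝ) (hdeg : ∀ n, (P n).degree = n)
    (hde : ∀ n, (X ^ 2 - 1) * derivative (derivative (P n))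
        + (C (2 + α + β) * X + C (α - β)) * derivative (P n)
        = C ((n : ℝ) * ((n : ℝ) + 1 + α + β)) * P n)
    (n : ℕ) (a : ℕ → ℝ) :
    ZC (∑ k ∈ Finset.range (n + 1), C ((k : ℝ) * ((k : ℝ) + 1 + α + β) * a k) * P k)
      ≤ ZC (∑ k ∈ Finset.range (n + 1), C (a k) * P k) :=
  stmt12_general α β hα hβ P hde n a
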